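/- Under the heat-matrix assumptions with zero sources, if u⁰_j ≥ 0 for every j, then for every k ≥ 1 and every index i one has CN_k(h)_i ≥ 0, and for every k ≥ 2 one has LN_k(h)_i ≥ 0; i.e., the constant-neighbour and linear-neighbour methods preserve positivity for every step size h > 0 in the absence of heat sinks. -/

import Mathlib

open Finset NormedSpace Asymptotics

/-- `aCoef M Q v i = Σ_{j≠i} M_ij v_j + Q_i`. -/
noncomputable def aCoef {N : ℕ} (M : Matrix (Fin N) (Fin N) ℝ) (Q : Fin N → ℝ)
    (v : Fin N → ℝ) (i : Fin N) : ℝ :=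
  (∑ j ∈ Finset.univ.erase i, M i j * v j) + Q i

/-- The constant-neighbour step `F_h`. -/
noncomputable def cnStep {N : ℕ} (M : Matrix (Fin N) (Fin N) ℝ) (Q u0 : Fin N → ℝ)
    (h : ℝ) (v : Fin N → ℝ) : Fin N → ℝ :=
  fun i => u0 i * Real.exp (M i i * h)
    + (aCoef M Q v i / (-(M i i))) * (1 - Real.exp (M i i * h))

/-- The `k`-stage constant-neighbour approximation `CN_k(h) = F_h^[k] u⁰`. -/
noncomputable def CN {N : ℕ} (M : Matrix (Fin N) (Fin N) ℝ) (Q u0 : Fin N → ℝ)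
    (k : ℕ) (h : ℝ) : Fin N → ℝ :=
  (cnStep M Q u0 h)^[k] u0

/-- The effective slope `s_i(v) = (a_i(v) − a_i(u⁰))/h`. -/
noncomputable def sCoef {N : ℕ} (M : Matrix (Fin N) (Fin N) ℝ) (Q u0 : Fin N → ℝ)
    (h : ℝ) (v : Fin N → ℝ) (i : Fin N) : ℝ :=
  (aCoef M Q v i - aCoef M Q u0 i) / h

/-- The linear-neighbour step `G_h`, with `τ_i = −1/M_ii`. -/
noncomputable def lnStep {N : ℕ} (M : Matrix (Fin N) (Fin N) ℝ) (Q u0 : Fin N → ℝ)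
    (h : ℝ) (v : Fin N → ℝ) : Fin N → ℝ :=
  fun i =>
    u0 i * Real.exp (M i i * h)
      + (aCoef M Q u0 i * (-(M i i)⁻¹) - sCoef M Q u0 h v i * (-(M i i)⁻¹) ^ 2)
          * (1 - Real.exp (M i i * h))
      + sCoef M Q u0 h v i * (-(M i i)⁻¹) * h

/-- The `k`-stage linear-neighbour approximation `LN_k(h) = G_h^[k−1] (CN_1(h))`, `k ≥ 2`. -/
noncomputable def LN {N : ℕ} (M : Matrix (Fin N) (Fin N) ℝ) (Q u0 : Fin N → ℝ)
    (k : ℕ) (h : ℝ) : Fin N → ℝ :=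
  (lnStep M Q u0 h)^[k - 1] (cnStep M Q u0 h u0)

/-- The exact solution `u_ex(h) = e^{hM} u⁰ + ∫₀^h e^{(h−s)M} Q ds`. -/
noncomputable def uex {N : ℕ} (M : Matrix (Fin N) (Fin N) ℝ) (Q u0 : Fin N → ℝ)
    (h : ℝ) : Fin N → ℝ :=
  (NormedSpace.exp (h • M)).mulVec u0 + ∫ s in (0:ℝ)..h, (NormedSpace.exp ((h - s) • M)).mulVec Q

/-! Both steps map nonnegative vectors to nonnegative vectors, so positivity propagates along the
iterations. For the constant-neighbour step this is clear: with `Q ≥ 0` the neighbour term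
`a_i(v)` is nonnegative, and `F_h(v)_i` combines `u⁰_i` and `a_i(v)` with the nonnegative weights
`e = e^{M_ii h}` and `τ_i (1 - e)`. For the linear-neighbour step the slope `s_i(v)` has no sign,
but multiplying by `h` and eliminating it gives
`h G_h(v)_i = u⁰_i e h + a_i(v) τ (h - τ (1 - e)) + a_i(u⁰) τ (τ - e (h + τ))`,
and both brackets are nonnegative by `1 - x ≤ e^{-x}`, used at `x = h/τ` and at `x = -h/τ`. -/

lemma aCoef_nonneg {N : ℕ} {M : Matrix (Fin N) (Fin N) ℝ} {Q v : Fin N → ℝ}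
    (hoff : ∀ i j, j ≠ i → 0 ≤ M i j) (hQ : 0 ≤ Q) (hv : 0 ≤ v) (i : Fin N) :
    0 ≤ aCoef M Q v i :=
  add_nonneg (Finset.sum_nonneg fun j hj => mul_nonneg (hoff i j (ne_of_mem_erase hj)) (hv j))
    (hQ i)

lemma linearNeighbour_formula_nonneg {m h u a₀ a : ℝ} (hm : m < 0) (hh : 0 < h) (hu : 0 ≤ u)
    (ha₀ : 0 ≤ a₀) (ha : 0 ≤ a) :
    0 ≤ u * Real.exp (m * h)
      + (a₀ * (-m⁻¹) - ((a - a₀) / h) * (-m⁻¹) ^ 2) * (1 - Real.exp (m * h))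
      + ((a - a₀) / h) * (-m⁻¹) * h := by
  set τ := -m⁻¹ with hτ_def
  set e := Real.exp (m * h) with he_def
  set s := (a - a₀) / h
  have hτ : 0 < τ := neg_pos.mpr (inv_lt_zero.mpr hm)
  have hmτ : m * τ = -1 := by rw [hτ_def, mul_neg, mul_inv_cancel₀ hm.ne]
  have hs : s * h = a - a₀ := div_mul_cancel₀ _ hh.ne'
  have he : 0 < e := Real.exp_pos _
  have h_lower : 1 + m * h ≤ e := by simpa [add_comm] using Real.add_one_le_exp (m * h)
  have h_upper : e * (1 - m * h) ≤ 1 := by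
    have := mul_le_mul_of_nonneg_left (Real.one_sub_le_exp_neg (m * h)) he.le
    rwa [he_def, ← Real.exp_add, add_neg_cancel, Real.exp_zero] at this
  have hc₁ : 0 ≤ h - τ * (1 - e) := by nlinarith
  have hc₂ : 0 ≤ τ - e * (h + τ) := by nlinarith
  rw [← mul_nonneg_iff_of_pos_right hh]
  calc (0 : ℝ) ≤ u * e * h + a * τ * (h - τ * (1 - e)) + a₀ * τ * (τ - e * (h + τ)) := by
        positivity
    _ = (u * e + (a₀ * τ - s * τ ^ 2) * (1 - e) + s * τ * h) * h := by
        linear_combination (τ ^ 2 * (1 - e) - τ * h) * hs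

variable {N : ℕ} {M : Matrix (Fin N) (Fin N) ℝ} {Q u0 : Fin N → ℝ} {h : ℝ}

lemma mapsTo_cnStep_nonneg (hoff : ∀ i j, j ≠ i → 0 ≤ M i j) (hdiag : ∀ i, M i i < 0)
    (hQ : 0 ≤ Q) (hu0 : 0 ≤ u0) (hh : 0 ≤ h) :
    Set.MapsTo (cnStep M Q u0 h) (Set.Ici 0) (Set.Ici 0) := fun v (hv : 0 ≤ v) i => by
  have he : Real.exp (M i i * h) ≤ 1 :=
    Real.exp_le_one_iff.mpr (mul_nonpos_of_nonpos_of_nonneg (hdiag i).le hh)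
  have ha : 0 ≤ aCoef M Q v i / -M i i :=
    div_nonneg (aCoef_nonneg hoff hQ hv i) (neg_nonneg.mpr (hdiag i).le)
  exact add_nonneg (mul_nonneg (hu0 i) (Real.exp_pos _).le) (mul_nonneg ha (sub_nonneg.mpr he))

lemma mapsTo_lnStep_nonneg (hoff : ∀ i j, j ≠ i → 0 ≤ M i j) (hdiag : ∀ i, M i i < 0)
    (hQ : 0 ≤ Q) (hu0 : 0 ≤ u0) (hh : 0 < h) :
    Set.MapsTo (lnStep M Q u0 h) (Set.Ici 0) (Set.Ici 0) := fun _ (hv : 0 ≤ _) i =>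
  linearNeighbour_formula_nonneg (hdiag i) hh (hu0 i) (aCoef_nonneg hoff hQ hu0 i)
    (aCoef_nonneg hoff hQ hv i)

theorem cn_ln_positivity_preserving_general {N : ℕ}
    (M : Matrix (Fin N) (Fin N) ℝ)
    (hoff : ∀ i j, j ≠ i → 0 ≤ M i j)
    (hdiag : ∀ i, M i i < 0)
    (u0 : Fin N → ℝ) (hu0 : ∀ j, 0 ≤ u0 j) (h : ℝ) (hh : 0 < h) :
    (∀ k : ℕ, 1 ≤ k → ∀ i : Fin N, 0 ≤ CN M (0 : Fin N → ℝ) u0 k h i) ∧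
      ∀ k : ℕ, 2 ≤ k → ∀ i : Fin N, 0 ≤ LN M (0 : Fin N → ℝ) u0 k h i := by
  have hu0' : u0 ∈ Set.Ici 0 := hu0
  have hcn := mapsTo_cnStep_nonneg hoff hdiag le_rfl hu0 hh.le
  have hln := mapsTo_lnStep_nonneg hoff hdiag le_rfl hu0 hh
  exact ⟨fun k _ => hcn.iterate k hu0', fun k _ => hln.iterate (k - 1) (hcn hu0')⟩

/-- Positivity preservation: under the heat-matrix assumptions with zero sources and
nonnegative initial values, all constant-neighbour values `CN_k(h)_i` (`k ≥ 1`) and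
all linear-neighbour values `LN_k(h)_i` (`k ≥ 2`) are nonnegative, for every `h > 0`. -/
theorem cn_ln_positivity_preserving {N : ℕ} (hN : 1 ≤ N)
    (M : Matrix (Fin N) (Fin N) ℝ)
    (hoff : ∀ i j, j ≠ i → 0 ≤ M i j)
    (hrow : ∀ i, ∑ j, M i j = 0)
    (hdiag : ∀ i, M i i < 0)
    (u0 : Fin N → ℝ) (hu0 : ∀ j, 0 ≤ u0 j) (h : ℝ) (hh : 0 < h) :
    (∀ k : ℕ, 1 ≤ k → ∀ i : Fin N, 0 ≤ CN M (0 : Fin N → ℝ) u0 k h i) ∧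
      ∀ k : ℕ, 2 ≤ k → ∀ i : Fin N, 0 ≤ LN M (0 : Fin N → ℝ) u0 k h i :=
  cn_ln_positivity_preserving_general M hoff hdiag u0 hu0 h hh
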